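/- Let G be a graph in which every vertex has degree 2 or degree k (k ≥ 3), δ(G)=2, Δ(G)=k, and every edge joins a vertex of degree 2 to a vertex of degree k. Then ν₁(G) = (2/(k+2))·|V(G)| and ν₂(G) = (4/(k+2))·|V(G)|. -/
import Mathlib


structure Multigraph where
  V : Type
  E : Type
  fintypeV : Fintype V
  decEqV : DecidableEq V
  fintypeE : Fintype E
  decEqE : DecidableEq E
  ends : E → Sym2 V

attribute [instance] Multigraph.fintypeV Multigraph.decEqV Multigraph.fintypeE Multigraph.decEqE

namespace Multigraph

/-- `e` is a loop if both of its endpoints coincide. -/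
def IsLoop (G : Multigraph) (e : G.E) : Prop := (G.ends e).IsDiag

/-- A loopless multigraph. -/
def Loopless (G : Multigraph) : Prop := ∀ e, ¬ G.IsLoop e

/-- Degree of a vertex: loops count twice. -/
def deg (G : Multigraph) (v : G.V) : ℕ :=
  ∑ e : G.E, (if G.ends e = Sym2.diag v then 2 else if v ∈ G.ends e then 1 else 0)

/-- Adjacency via some edge. -/
def Adj (G : Multigraph) (u v : G.V) : Prop := ∃ e, G.ends e = s(u, v)

/-- Connectivity. -/
def Connected (G : Multigraph) : Prop := ∀ u v : G.V, Relation.ReflTransGen G.Adj u v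

/-- A matching: a set of non-loop edges no two of which share an endpoint. -/
def IsMatching (G : Multigraph) (M : Finset G.E) : Prop :=
  (∀ e ∈ M, ¬ G.IsLoop e) ∧
  ∀ e ∈ M, ∀ f ∈ M, e ≠ f → ∀ v : G.V, v ∈ G.ends e → v ∉ G.ends f

/-- A maximum matching. -/
def IsMaximumMatching (G : Multigraph) (M : Finset G.E) : Prop :=
  G.IsMatching M ∧ ∀ M' : Finset G.E, G.IsMatching M' → M'.card ≤ M.card

/-- `v` is saturated by `M`. -/
def Saturated (G : Multigraph) (M : Finset G.E) (v : G.V) : Prop :=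
  ∃ e ∈ M, v ∈ G.ends e

/-- Size of a maximum matching. -/
noncomputable def nu1 (G : Multigraph) : ℕ :=
  sSup {m | ∃ M : Finset G.E, G.IsMatching M ∧ M.card = m}

/-- Max number of edges coverable by two disjoint matchings. -/
noncomputable def nu2 (G : Multigraph) : ℕ :=
  sSup {m | ∃ H H' : Finset G.E, G.IsMatching H ∧ G.IsMatching H' ∧
    Disjoint H H' ∧ H.card + H'.card = m}

/-- Max number of edges coverable by three pairwise disjoint matchings. -/
noncomputable def nu3 (G : Multigraph) : ℕ :=
  sSup {m | ∃ H₁ H₂ H₃ : Finset G.E, G.IsMatching H₁ ∧ G.IsMatching H₂ ∧ G.IsMatching H₃ ∧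
    Disjoint H₁ H₂ ∧ Disjoint H₁ H₃ ∧ Disjoint H₂ H₃ ∧ H₁.card + H₂.card + H₃.card = m}

/-- Subdividing the edge `e`, with endpoints `u`, `v`, once: replace it by a path `u - w - v`
through a new vertex `w`. -/
def subdivideOnce (G : Multigraph) (e : G.E) (u v : G.V) : Multigraph where
  V := G.V ⊕ Unit
  E := {f : G.E // f ≠ e} ⊕ Bool
  fintypeV := inferInstance
  decEqV := inferInstance
  fintypeE := inferInstance
  decEqE := inferInstance
  ends := fun f =>
    match f with
    | Sum.inl ⟨f, _⟩ => (G.ends f).map Sum.inl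
    | Sum.inr true => s(Sum.inl u, Sum.inr ())
    | Sum.inr false => s(Sum.inl v, Sum.inr ())

/-- Subdividing every edge `e` exactly `k e` times, where `fst`/`snd` pick out the endpoints
of every edge. The edge `e` is replaced by the path
`fst e, (e,0), (e,1), …, (e, k e - 1), snd e` of length `k e + 1`. -/
def subdivide (G : Multigraph) (fst snd : G.E → G.V) (k : G.E → ℕ) : Multigraph where
  V := G.V ⊕ (Σ e : G.E, Fin (k e))
  E := Σ e : G.E, Fin (k e + 1)
  fintypeV := inferInstance
  decEqV := inferInstance
  fintypeE := inferInstance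
  decEqE := inferInstance
  ends := fun f =>
    s( if h : f.2.val = 0 then Sum.inl (fst f.1)
       else Sum.inr ⟨f.1, ⟨f.2.val - 1, by omega⟩⟩,
       if h : f.2.val = k f.1 then Sum.inl (snd f.1)
       else Sum.inr ⟨f.1, ⟨f.2.val, by have := f.2.isLt; omega⟩⟩ )


open Finset

private lemma deg_eq_card' (G : Multigraph) (hl : G.Loopless) (v : G.V) :
    G.deg v = (univ.filter (fun e => v ∈ G.ends e)).card := by
  classical
  unfold deg
  rw [Finset.card_filter]
  refine Finset.sum_congr rfl fun e _ => ?_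
  have h : G.ends e ≠ Sym2.diag v := fun h => hl e (by unfold IsLoop; rw [h]; exact Sym2.diag_isDiag v)
  simp [h]

private lemma exists_sat_matching (G : Multigraph) (k : ℕ) (hk : 3 ≤ k) (hl : G.Loopless)
    (fA fB : G.E → G.V)
    (hends : ∀ e, G.ends e = s(fA e, fB e))
    (hA : ∀ e, G.deg (fA e) = 2)
    (hB : ∀ e, G.deg (fB e) = k)
    (P : G.E → Prop) [DecidablePred P]
    (hP : ∀ b : G.V, G.deg b = k → 2 ≤ (univ.filter (fun e => fB e = b ∧ P e)).card) :
    ∃ M : Finset G.E, G.IsMatching M ∧ (∀ e ∈ M, P e) ∧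
      M.card = (univ.filter (fun v : G.V => G.deg v = k)).card := by
  classical
  set t : {v : G.V // G.deg v = k} → Finset G.V :=
    fun b => (univ.filter (fun e => fB e = b.1 ∧ P e)).image fA with ht
  have hall : ∀ s : Finset {v : G.V // G.deg v = k}, s.card ≤ (s.biUnion t).card := by
    intro s
    set Es : Finset G.E := s.biUnion (fun b => univ.filter (fun e => fB e = b.1 ∧ P e)) with hEs
    have hdisj : ∀ b ∈ s, ∀ b' ∈ s, b ≠ b' →
        Disjoint (univ.filter (fun e => fB e = b.1 ∧ P e))
          (univ.filter (fun e => fB e = b'.1 ∧ P e)) := by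
      intro b _ b' _ hbb'
      rw [Finset.disjoint_left]
      intro e he he'
      simp only [mem_filter] at he he'
      exact hbb' (Subtype.ext (he.2.1 ▸ he'.2.1.symm ▸ rfl))
    have h1 : 2 * s.card ≤ Es.card := by
      rw [hEs, Finset.card_biUnion hdisj]
      calc 2 * s.card = ∑ _b ∈ s, 2 := by rw [Finset.sum_const, smul_eq_mul, mul_comm]
        _ ≤ _ := Finset.sum_le_sum fun b _ => hP b.1 b.2
    have h2 : Es.card ≤ 2 * (Es.image fA).card := by
      refine Finset.card_le_mul_card_image Es 2 fun a ha => ?_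
      obtain ⟨e0, _, rfl⟩ := Finset.mem_image.mp ha
      calc (Es.filter (fun e => fA e = fA e0)).card
          ≤ (univ.filter (fun e => fA e0 ∈ G.ends e)).card := by
            refine Finset.card_le_card fun e he => ?_
            simp only [mem_filter, mem_univ, true_and] at he ⊢
            rw [hends e, ← he.2, Sym2.mem_iff]; left; rfl
        _ = G.deg (fA e0) := (deg_eq_card' G hl _).symm
        _ = 2 := hA e0
    have himg : Es.image fA = s.biUnion t := by
      rw [hEs, Finset.biUnion_image]
    rw [← himg]; omega
  obtain ⟨g, hginj, hg⟩ := (Finset.all_card_le_biUnion_card_iff_exists_injective t).mp hall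
  have hchoose : ∀ b : {v : G.V // G.deg v = k}, ∃ e, fB e = b.1 ∧ P e ∧ fA e = g b := by
    intro b
    have := hg b
    simp only [ht, Finset.mem_image, mem_filter, mem_univ, true_and] at this
    obtain ⟨e, ⟨he1, he2⟩, he3⟩ := this
    exact ⟨e, he1, he2, he3⟩
  choose m hm1 hm2 hm3 using hchoose
  have hminj : Function.Injective m := fun b b' h =>
    Subtype.ext (by rw [← hm1 b, ← hm1 b', h])
  refine ⟨univ.image m, ⟨fun e _ => hl e, ?_⟩, ?_, ?_⟩
  · intro e he f hf hef v hve hvf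
    simp only [Finset.mem_image, mem_univ, true_and] at he hf
    obtain ⟨b, rfl⟩ := he; obtain ⟨b', rfl⟩ := hf
    have hb : b ≠ b' := fun h => hef (by rw [h])
    rw [hends, Sym2.mem_iff] at hve hvf
    rcases hve with h1 | h1 <;> rcases hvf with h2 | h2
    · exact hb (hginj (by rw [← hm3, ← hm3, ← h1, ← h2]))
    · have e1 := hA (m b); have e2 := hB (m b'); rw [← h1] at e1; rw [← h2] at e2; omega
    · have e1 := hB (m b); have e2 := hA (m b'); rw [← h1] at e1; rw [← h2] at e2; omega
    · exact hb (Subtype.ext (by rw [← hm1 b, ← hm1 b', ← h1, ← h2]))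
  · intro e he
    obtain ⟨b, _, rfl⟩ := Finset.mem_image.mp he
    exact hm2 b
  · rw [Finset.card_image_of_injective _ hminj, Finset.card_univ, Fintype.card_subtype]

private lemma matching_card_le' (G : Multigraph) (k : ℕ)
    (fA fB : G.E → G.V)
    (hends : ∀ e, G.ends e = s(fA e, fB e))
    (hB : ∀ e, G.deg (fB e) = k)
    (M : Finset G.E) (hM : G.IsMatching M) :
    M.card ≤ (univ.filter (fun v : G.V => G.deg v = k)).card := by
  classical
  refine Finset.card_le_card_of_injOn fB (fun e _ => by simp [hB e]) ?_
  intro e he f hf hef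
  by_contra hne
  exact hM.2 e he f hf hne (fB e) (by rw [hends e, Sym2.mem_iff]; right; rfl)
    (by rw [hends f, Sym2.mem_iff]; right; exact hef)

private lemma fiber_card_B (G : Multigraph) (k : ℕ) (hk2 : k ≠ 2) (hl : G.Loopless)
    (fA fB : G.E → G.V)
    (hends : ∀ e, G.ends e = s(fA e, fB e))
    (hA : ∀ e, G.deg (fA e) = 2)
    (b : G.V) (hb : G.deg b = k) :
    (univ.filter (fun e => fB e = b)).card = k := by
  classical
  have : (univ.filter (fun e => fB e = b)) = univ.filter (fun e => b ∈ G.ends e) := by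
    ext e
    simp only [mem_filter, mem_univ, true_and]
    constructor
    · intro h; rw [hends e, Sym2.mem_iff]; right; exact h.symm
    · intro h
      rw [hends e, Sym2.mem_iff] at h
      rcases h with h | h
      · exfalso; rw [h] at hb; rw [hA e] at hb; exact hk2 hb.symm
      · exact h.symm
  rw [this, ← deg_eq_card' G hl, hb]


private lemma fiber_card_A (G : Multigraph) (k : ℕ) (hk2 : k ≠ 2) (hl : G.Loopless)
    (fA fB : G.E → G.V)
    (hends : ∀ e, G.ends e = s(fA e, fB e))
    (hB : ∀ e, G.deg (fB e) = k)
    (a : G.V) (ha : G.deg a = 2) :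
    (univ.filter (fun e => fA e = a)).card = 2 := by
  classical
  have : (univ.filter (fun e => fA e = a)) = univ.filter (fun e => a ∈ G.ends e) := by
    ext e
    simp only [mem_filter, mem_univ, true_and]
    constructor
    · intro h; rw [hends e, Sym2.mem_iff]; left; exact h.symm
    · intro h
      rw [hends e, Sym2.mem_iff] at h
      rcases h with h | h
      · exact h.symm
      · exfalso; rw [h] at ha; rw [hB e] at ha; exact hk2 ha
  rw [this, ← deg_eq_card' G hl, ha]


/-- If every vertex has degree 2 or k (k ≥ 3), both degrees occur, and every
edge joins a degree-2 vertex to a degree-k vertex, then ν₁(G) = (2/(k+2))·|V(G)| and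
ν₂(G) = (4/(k+2))·|V(G)|. -/
theorem nu1_nu2_in_two_k_graphs
    (G : Multigraph) (k : ℕ) (hk : 3 ≤ k) (hloopless : G.Loopless)
    (hdeg : ∀ v : G.V, G.deg v = 2 ∨ G.deg v = k)
    (hmin : ∃ v : G.V, G.deg v = 2) (hmax : ∃ v : G.V, G.deg v = k)
    (hedge : ∀ e : G.E, ∃ u v : G.V, G.ends e = s(u, v) ∧ G.deg u = 2 ∧ G.deg v = k) :
    (k + 2) * G.nu1 = 2 * Fintype.card G.V ∧ (k + 2) * G.nu2 = 4 * Fintype.card G.V := by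
  classical
  have hk2 : k ≠ 2 := by omega
  choose fA fB hends hA hB using hedge
  set Bs : Finset G.V := univ.filter (fun v : G.V => G.deg v = k) with hBs
  set As : Finset G.V := univ.filter (fun v : G.V => G.deg v = 2) with hAs
  -- first matching
  obtain ⟨M1, hM1, -, hM1card⟩ := exists_sat_matching G k hk hloopless fA fB hends hA hB
    (fun _ => True) (fun b hb => by
      have h := fiber_card_B G k hk2 hloopless fA fB hends hA b hb
      have he : (univ.filter (fun e => fB e = b ∧ True)) = univ.filter (fun e => fB e = b) := by
        ext e; simp
      rw [he, h]; omega)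
  -- second matching, edge-disjoint from the first
  obtain ⟨M2, hM2, hM2P, hM2card⟩ := exists_sat_matching G k hk hloopless fA fB hends hA hB
    (fun e => e ∉ M1) (fun b hb => by
      have hfib := fiber_card_B G k hk2 hloopless fA fB hends hA b hb
      have hsplit := Finset.card_filter_add_card_filter_not
        (s := univ.filter (fun e => fB e = b)) (p := fun e => e ∈ M1)
      have hone : ((univ.filter (fun e => fB e = b)).filter (fun e => e ∈ M1)).card ≤ 1 := by
        rw [Finset.card_le_one]
        intro e he f hf
        simp only [Finset.mem_filter, Finset.mem_univ, true_and] at he hf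
        by_contra hne
        exact hM1.2 e he.2 f hf.2 hne b
          (by rw [hends e, Sym2.mem_iff]; right; exact he.1.symm)
          (by rw [hends f, Sym2.mem_iff]; right; exact hf.1.symm)
      have heq : univ.filter (fun e => fB e = b ∧ e ∉ M1)
          = (univ.filter (fun e => fB e = b)).filter (fun e => ¬ e ∈ M1) := by
        rw [Finset.filter_filter]
      rw [heq]; omega)
  rw [← hBs] at hM1card hM2card
  have hdisj : Disjoint M1 M2 := Finset.disjoint_left.mpr fun e he1 he2 => hM2P e he2 he1
  have hempty : G.IsMatching (∅ : Finset G.E) :=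
    ⟨fun e he => absurd he (Finset.notMem_empty e),
     fun e he => absurd he (Finset.notMem_empty e)⟩
  -- nu1 = |Bs|
  have hub1 : ∀ m ∈ {m | ∃ M : Finset G.E, G.IsMatching M ∧ M.card = m}, m ≤ Bs.card := by
    rintro m ⟨M, hM, rfl⟩
    have h := matching_card_le' G k fA fB hends hB M hM
    rwa [← hBs] at h
  have hnu1 : G.nu1 = Bs.card := by
    refine le_antisymm (csSup_le ⟨0, ∅, hempty, by simp⟩ hub1) ?_
    exact le_csSup ⟨Bs.card, hub1⟩ ⟨M1, hM1, hM1card⟩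
  -- nu2 = 2|Bs|
  have hub2 : ∀ m ∈ {m | ∃ H H' : Finset G.E, G.IsMatching H ∧ G.IsMatching H' ∧
      Disjoint H H' ∧ H.card + H'.card = m}, m ≤ 2 * Bs.card := by
    rintro m ⟨H, H', hH, hH', -, rfl⟩
    have h1 := matching_card_le' G k fA fB hends hB H hH
    have h2 := matching_card_le' G k fA fB hends hB H' hH'
    rw [← hBs] at h1 h2
    omega
  have hnu2 : G.nu2 = 2 * Bs.card := by
    refine le_antisymm (csSup_le ⟨0, ∅, ∅, hempty, hempty, by simp⟩ hub2) ?_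
    refine le_csSup ⟨2 * Bs.card, hub2⟩ ⟨M1, M2, hM1, hM2, hdisj, by omega⟩
  -- edge counts
  have hEk : Fintype.card G.E = Bs.card * k := by
    have h0 : (univ : Finset G.E).card = ∑ b ∈ Bs, (univ.filter (fun e => fB e = b)).card :=
      Finset.card_eq_sum_card_fiberwise (fun e _ => by simp [hBs, hB e])
    rw [← Finset.card_univ, h0,
      Finset.sum_congr rfl (fun b hb => fiber_card_B G k hk2 hloopless fA fB hends hA b
        (by simpa [hBs] using hb)), Finset.sum_const, smul_eq_mul]
  have hE2 : Fintype.card G.E = As.card * 2 := by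
    have h0 : (univ : Finset G.E).card = ∑ a ∈ As, (univ.filter (fun e => fA e = a)).card :=
      Finset.card_eq_sum_card_fiberwise (fun e _ => by simp [hAs, hA e])
    rw [← Finset.card_univ, h0,
      Finset.sum_congr rfl (fun a ha => fiber_card_A G k hk2 hloopless fA fB hends hB a
        (by simpa [hAs] using ha)), Finset.sum_const, smul_eq_mul]
  have hV : Fintype.card G.V = As.card + Bs.card := by
    rw [← Finset.card_univ,
      ← Finset.card_filter_add_card_filter_not (s := univ) (p := fun v => G.deg v = 2)]
    congr 1
    rw [hBs]
    congr 1
    ext v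
    simp only [Finset.mem_filter, Finset.mem_univ, true_and]
    rcases hdeg v with h | h <;> simp [h] <;> omega
  have hkey : Bs.card * k = As.card * 2 := hEk.symm.trans hE2
  constructor
  · rw [hnu1, hV]
    calc (k + 2) * Bs.card = Bs.card * k + 2 * Bs.card := by ring
      _ = As.card * 2 + 2 * Bs.card := by rw [hkey]
      _ = 2 * (As.card + Bs.card) := by ring
  · rw [hnu2, hV]
    calc (k + 2) * (2 * Bs.card) = 2 * (Bs.card * k) + 4 * Bs.card := by ring
      _ = 2 * (As.card * 2) + 4 * Bs.card := by rw [hkey]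
      _ = 4 * (As.card + Bs.card) := by ring


end Multigraph
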